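/- Let z ∈ ℂ \ [0,∞). Then there is a constant C < ∞ such that |G(x,y,z)| ≤ C for all y ≥ x ≥ x₁(z). -/

import Mathlib

open MeasureTheory Filter Set Complex

noncomputable section

/-- The principal-branch square root `ω(x,z) = ((q x − z)/p x)^{1/2}`. -/
def omg (p q : ℝ → ℝ) (z : ℂ) (x : ℝ) : ℂ :=
  (((q x : ℂ) - z) / (p x : ℂ)) ^ (1 / 2 : ℂ)

/-- `Ω(x,z) = ∫₀ˣ ω(y,z) dy`. -/
def Omg (p q : ℝ → ℝ) (z : ℂ) (x : ℝ) : ℂ :=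
  ∫ y in (0:ℝ)..x, omg p q z y

/-- `a(x,z) = exp(−Ω(x,z))`. -/
def aa (p q : ℝ → ℝ) (z : ℂ) (x : ℝ) : ℂ :=
  Complex.exp (-(Omg p q z x))

/-- Assumption (PQ): `p > 0` on `[0,∞)`, locally absolutely continuous with integrable
derivative `p'` and limit `p₀ > 0` at `+∞`; `q` integrable on `(0,x₀)`, locally absolutely
continuous on `[x₀,∞)` with integrable derivative `q'` there, and `q → 0` at `+∞`.
Absolute continuity is encoded by the fundamental theorem of calculus representation. -/
structure PQData (p p' q q' : ℝ → ℝ) (p₀ x₀ : ℝ) : Prop where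
  p_pos : ∀ x : ℝ, 0 ≤ x → 0 < p x
  hp₀ : 0 < p₀
  hx₀ : 0 ≤ x₀
  p_ac : ∀ x : ℝ, 0 ≤ x → p x = p 0 + ∫ t in (0:ℝ)..x, p' t
  p'_int : IntegrableOn p' (Ioi (0:ℝ))
  p_lim : Tendsto p atTop (nhds p₀)
  q_int : IntegrableOn q (Ioo (0:ℝ) x₀)
  q_ac : ∀ x : ℝ, x₀ ≤ x → q x = q x₀ + ∫ t in x₀..x, q' t
  q'_int : IntegrableOn q' (Ioi x₀)
  q_lim : Tendsto q atTop (nhds (0:ℝ))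

/-- `f` (with derivative `f'`) solves `−(p f')' + q f = z f` on `I`:
`f` is differentiable on `I` with derivative `f'`, and `p·f'` is locally absolutely
continuous on `I` with a.e. derivative `(q − z)·f` (encoded via the FTC representation). -/
def IsSol (p q : ℝ → ℝ) (z : ℂ) (I : Set ℝ) (f f' : ℝ → ℂ) : Prop :=
  (∀ x ∈ I, HasDerivWithinAt f (f' x) I x) ∧
    ∀ x ∈ I, ∀ y ∈ I,
      (p y : ℂ) * f' y - (p x : ℂ) * f' x = ∫ t in x..y, ((q t : ℂ) - z) * f t

/-- `ε(x) = ∫ₓ^∞ (|p'| + |q'|)`. -/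
def eps (p' q' : ℝ → ℝ) (x : ℝ) : ℝ :=
  ∫ y in Ioi x, (|p' y| + |q' y|)

/-- The Volterra kernel `G(x,y,z) = a(y,z)² ∫ₓ^y p(s)⁻¹ a(s,z)⁻² ds`. -/
def Gker (p q : ℝ → ℝ) (z : ℂ) (x y : ℝ) : ℂ :=
  aa p q z y ^ 2 * ∫ s in x..y, ((p s : ℂ))⁻¹ * (aa p q z s ^ 2)⁻¹

/-- `Φ(x,λ) = ∫₀ˣ √(max((λ − q)/p, 0))`. -/
def Phi (p q : ℝ → ℝ) (lam x : ℝ) : ℝ :=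
  ∫ y in (0:ℝ)..x, Real.sqrt (max ((lam - q y) / p y) 0)

/-- `K(λ) = exp(−∫₀^∞ √(max((q − λ)/p, 0)))`. -/
def Kc (p q : ℝ → ℝ) (lam : ℝ) : ℝ :=
  Real.exp (-∫ y in Ioi (0:ℝ), Real.sqrt (max ((q y - lam) / p y) 0))

/-- `ξ(x) = θ(x)·∫_ϱ^x θ(y)⁻² p(y)⁻¹ dy`. -/
def xiFun (p : ℝ → ℝ) (θ : ℝ → ℂ) (ϱ x : ℝ) : ℂ :=
  θ x * ∫ y in ϱ..x, (θ y ^ 2)⁻¹ * ((p y : ℂ))⁻¹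

/-- The derivative of `ξ`: `ξ'(x) = θ'(x)·∫_ϱ^x θ⁻² p⁻¹ + θ(x)⁻¹ p(x)⁻¹`. -/
def xiFun' (p : ℝ → ℝ) (θ θ' : ℝ → ℂ) (ϱ x : ℝ) : ℂ :=
  θ' x * (∫ y in ϱ..x, (θ y ^ 2)⁻¹ * ((p y : ℂ))⁻¹) + (θ x)⁻¹ * ((p x : ℂ))⁻¹

/-! For `s ≥ x₁` the number `q s - z` stays in a compact part of the slit plane and `p` is bounded
above, so `re ω ≥ δ > 0` there. Hence `‖a(y)² / a(s)²‖ = exp (-2 re ∫ₛʸ ω) ≤ exp (-2δ (y - s))`,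
and with `p ≥ m > 0` the kernel is bounded by `∫ₓʸ m⁻¹ exp (-2δ (y - s)) ds ≤ (2δm)⁻¹`. -/

lemma norm_add_re_pos_of_mem_slitPlane {u : ℂ} (hu : u ∈ slitPlane) : 0 < ‖u‖ + u.re := by
  rcases mem_slitPlane_iff.1 hu with hre | him
  · linarith [norm_nonneg u]
  · linarith [abs_re_lt_norm.2 him, neg_abs_le u.re]

lemma ofReal_sub_mem_slitPlane {z : ℂ} (hz : ∀ t : ℝ, 0 ≤ t → (t : ℂ) ≠ z) {t : ℝ}
    (ht : |t| ≤ ‖z‖ / 2) : (t : ℂ) - z ∈ slitPlane := by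
  rw [mem_slitPlane_iff, sub_re, sub_im, ofReal_re, ofReal_im, zero_sub, neg_ne_zero, sub_pos]
  by_contra! ⟨hre, him⟩
  have hz_real : (z.re : ℂ) = z := ext rfl (by simp [him])
  have hneg : z.re < 0 := lt_of_not_ge fun h0 => hz z.re h0 hz_real
  have hnorm : ‖z‖ = -z.re := by rw [← abs_re_eq_norm.2 him, abs_of_neg hneg]
  linarith [neg_abs_le t]

lemma exists_pos_le_norm_ofReal_sub_add_re {z : ℂ} (hz : ∀ t : ℝ, 0 ≤ t → (t : ℂ) ≠ z) :
    ∃ c > 0, ∀ t : ℝ, |t| ≤ ‖z‖ / 2 → c ≤ ‖(t : ℂ) - z‖ + ((t : ℂ) - z).re := by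
  have hK : IsCompact (Icc (-(‖z‖ / 2)) (‖z‖ / 2)) := isCompact_Icc
  obtain ⟨t₀, ht₀, hmin⟩ := hK.exists_isMinOn (nonempty_Icc.2 (by linarith [norm_nonneg z]))
    (f := fun t : ℝ => ‖(t : ℂ) - z‖ + ((t : ℂ) - z).re) (by fun_prop)
  exact ⟨_, norm_add_re_pos_of_mem_slitPlane (ofReal_sub_mem_slitPlane hz (abs_le.2 ht₀)),
    fun t ht => isMinOn_iff.1 hmin t (abs_le.1 ht)⟩

lemma re_omg_eq {p q : ℝ → ℝ} {z : ℂ} {x : ℝ} (hp : 0 < p x) :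
    (omg p q z x).re = √((‖(q x : ℂ) - z‖ + ((q x : ℂ) - z).re) / (2 * p x)) := by
  rw [omg, one_div, cpow_inv_two_re, norm_div, norm_real, Real.norm_of_nonneg hp.le,
    div_ofReal_re, ← add_div, div_div, mul_comm]

lemma norm_cpow_one_half_le (w : ℂ) : ‖w ^ (1 / 2 : ℂ)‖ ≤ 1 + ‖w‖ := by
  have h : ‖w ^ (1 / 2 : ℂ)‖ = √‖w‖ := by
    rw [one_div, show (2 : ℂ)⁻¹ = ((2 : ℕ) : ℂ)⁻¹ by norm_num, norm_cpow_inv_nat,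
      Real.sqrt_eq_rpow, Nat.cast_ofNat, one_div]
  rw [h]
  nlinarith [Real.sq_sqrt (norm_nonneg w), Real.sqrt_nonneg ‖w‖, sq_nonneg (√‖w‖ - 1)]

lemma continuousOn_Ici_of_eq_add_integral {g g' : ℝ → ℝ} {c : ℝ}
    (hac : ∀ x, c ≤ x → g x = g c + ∫ t in c..x, g' t) (hint : IntegrableOn g' (Ioi c)) :
    ContinuousOn g (Ici c) := by
  refine continuousOn_of_locally_continuousOn fun x hx => ⟨Iio (x + 1), isOpen_Iio, by simp, ?_⟩
  have hcx : c ≤ x + 1 := by linarith [mem_Ici.1 hx]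
  have hint' : IntegrableOn g' (uIcc c (x + 1)) := by
    rw [uIcc_of_le hcx, integrableOn_Icc_iff_integrableOn_Ioc]
    exact hint.mono_set Ioc_subset_Ioi_self
  refine ((continuousOn_const.add (intervalIntegral.continuousOn_primitive_interval hint')).mono
    ?_).congr fun y hy => hac y hy.1
  rw [uIcc_of_le hcx]
  exact fun y hy => ⟨hy.1, hy.2.le⟩

lemma ContinuousOn.exists_le_of_tendsto {f : ℝ → ℝ} {a L : ℝ} (hf : ContinuousOn f (Ici a))
    (hlim : Tendsto f atTop (nhds L)) : ∃ M, ∀ x, a ≤ x → f x ≤ M := by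
  obtain ⟨X, hX⟩ := eventually_atTop.1 (hlim.eventually_le_const (lt_add_one L))
  have hK : IsCompact (Icc a (max a X)) := isCompact_Icc
  obtain ⟨t, -, hmax⟩ := hK.exists_isMaxOn (nonempty_Icc.2 (le_max_left a X))
    (hf.mono Icc_subset_Ici_self)
  refine ⟨max (f t) (L + 1), fun x hx => ?_⟩
  rcases le_total x (max a X) with h | h
  · exact (isMaxOn_iff.1 hmax x ⟨hx, h⟩).trans (le_max_left _ _)
  · exact (hX x ((le_max_right a X).trans h)).trans (le_max_right _ _)

lemma ContinuousOn.exists_pos_le_of_tendsto {f : ℝ → ℝ} {a L : ℝ} (hf : ContinuousOn f (Ici a))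
    (hpos : ∀ x, a ≤ x → 0 < f x) (hL : 0 < L) (hlim : Tendsto f atTop (nhds L)) :
    ∃ m > 0, ∀ x, a ≤ x → m ≤ f x := by
  obtain ⟨M, hM⟩ := (hf.inv₀ fun x hx => (hpos x hx).ne').exists_le_of_tendsto
    (hlim.inv₀ hL.ne')
  have hM0 : 0 < M := (inv_pos.2 (hpos a le_rfl)).trans_le (hM a le_rfl)
  exact ⟨M⁻¹, inv_pos.2 hM0, fun x hx => inv_le_of_inv_le₀ (hpos x hx) (hM x hx)⟩

lemma mul_sub_le_re_integral {ω : ℝ → ℂ} {δ s y : ℝ} (hsy : s ≤ y)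
    (hω : IntervalIntegrable ω volume s y)
    (hre : ∀ t ∈ Icc s y, δ ≤ (ω t).re) : δ * (y - s) ≤ (∫ t in s..y, ω t).re := by
  have h := intervalIntegral.integral_mono_on hsy intervalIntegrable_const
    (⟨hω.1.re, hω.2.re⟩ : IntervalIntegrable (fun t => (ω t).re) volume s y) hre
  rw [intervalIntegral.integral_const, smul_eq_mul] at h
  have hcomm := reCLM.intervalIntegral_comp_comm hω
  simp only [reCLM_apply] at hcomm
  linarith

lemma integral_exp_mul_sub_le {c : ℝ} (hc : 0 < c) (x y : ℝ) :
    ∫ s in x..y, Real.exp (c * s - c * y) ≤ c⁻¹ := by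
  rw [intervalIntegral.integral_comp_mul_sub (f := Real.exp) hc.ne', integral_exp, sub_self,
    Real.exp_zero, smul_eq_mul]
  exact mul_le_of_le_one_right (inv_pos.2 hc).le (by linarith [Real.exp_pos (c * x - c * y)])

lemma norm_Gker_le {p q : ℝ → ℝ} {z : ℂ} {m δ x y : ℝ} (hm : 0 < m) (hδ : 0 < δ) (hx : 0 ≤ x)
    (hxy : x ≤ y) (hp : ∀ s ∈ Icc x y, m ≤ p s) (hω : IntervalIntegrable (omg p q z) volume 0 y)
    (hre : ∀ s ∈ Icc x y, δ ≤ (omg p q z s).re) :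
    ‖Gker p q z x y‖ ≤ m⁻¹ * (2 * δ)⁻¹ := by
  have hpoint : ∀ s ∈ Icc x y, ‖aa p q z y ^ 2 * ((p s : ℂ)⁻¹ * (aa p q z s ^ 2)⁻¹)‖
      ≤ m⁻¹ * Real.exp (2 * δ * s - 2 * δ * y) := by
    intro s hs
    have hω0s : IntervalIntegrable (omg p q z) volume 0 s :=
      hω.mono_set <| uIcc_subset_uIcc_left <| by
        rw [uIcc_of_le (hx.trans hxy)]
        exact ⟨hx.trans hs.1, hs.2⟩
    have hωsy : IntervalIntegrable (omg p q z) volume s y := hω0s.symm.trans hω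
    have hdecay : δ * (y - s) ≤ (Omg p q z y).re - (Omg p q z s).re := by
      have h := mul_sub_le_re_integral hs.2 hωsy fun t ht => hre t ⟨hs.1.trans ht.1, ht.2⟩
      rwa [← intervalIntegral.integral_interval_sub_left hω hω0s, sub_re] at h
    have hps : 0 < p s := hm.trans_le (hp s hs)
    rw [norm_mul, norm_mul, norm_inv, norm_real, Real.norm_of_nonneg hps.le, norm_inv, aa, aa,
      norm_pow, norm_pow, norm_exp, norm_exp, neg_re, neg_re, ← Real.exp_nat_mul,
      ← Real.exp_nat_mul, ← Real.exp_neg, mul_left_comm, ← Real.exp_add]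
    gcongr
    · exact hp s hs
    · push_cast
      linarith
  calc ‖Gker p q z x y‖
      = ‖∫ s in x..y, aa p q z y ^ 2 * ((p s : ℂ)⁻¹ * (aa p q z s ^ 2)⁻¹)‖ := by
        rw [Gker, intervalIntegral.integral_const_mul]
    _ ≤ ∫ s in x..y, m⁻¹ * Real.exp (2 * δ * s - 2 * δ * y) :=
        intervalIntegral.norm_integral_le_of_norm_le hxy
          (ae_of_all _ fun s hs => hpoint s (Ioc_subset_Icc_self hs))
          (Continuous.intervalIntegrable (by fun_prop) x y)
    _ ≤ m⁻¹ * (2 * δ)⁻¹ := by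
        rw [intervalIntegral.integral_const_mul]
        gcongr
        exact integral_exp_mul_sub_le (by positivity) x y

namespace PQData

variable {p p' q q' : ℝ → ℝ} {p₀ x₀ : ℝ}

lemma continuousOn_p (h : PQData p p' q q' p₀ x₀) : ContinuousOn p (Ici 0) :=
  continuousOn_Ici_of_eq_add_integral h.p_ac h.p'_int

lemma continuousOn_q (h : PQData p p' q q' p₀ x₀) : ContinuousOn q (Ici x₀) :=
  continuousOn_Ici_of_eq_add_integral h.q_ac h.q'_int

lemma exists_le_p (h : PQData p p' q q' p₀ x₀) : ∃ M, ∀ x, 0 ≤ x → p x ≤ M :=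
  h.continuousOn_p.exists_le_of_tendsto h.p_lim

lemma exists_pos_le_p (h : PQData p p' q q' p₀ x₀) : ∃ m > 0, ∀ x, 0 ≤ x → m ≤ p x :=
  h.continuousOn_p.exists_pos_le_of_tendsto h.p_pos h.hp₀ h.p_lim

lemma integrableOn_q (h : PQData p p' q q' p₀ x₀) (b : ℝ) : IntegrableOn q (Ioc 0 b) := by
  have hq₂ : IntegrableOn q (Icc x₀ (max b x₀)) :=
    (h.continuousOn_q.mono Icc_subset_Ici_self).integrableOn_Icc
  have hq : IntegrableOn q (Ioc 0 (max b x₀)) := by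
    rw [← Ioc_union_Ioc_eq_Ioc h.hx₀ (le_max_right b x₀)]
    exact ((integrableOn_Ioc_iff_integrableOn_Ioo).2 h.q_int).union
      (hq₂.mono_set Ioc_subset_Icc_self)
  exact hq.mono_set (Ioc_subset_Ioc_right (le_max_left b x₀))

lemma intervalIntegrable_omg (h : PQData p p' q q' p₀ x₀) (z : ℂ) {b : ℝ} (hb : 0 ≤ b) :
    IntervalIntegrable (omg p q z) volume 0 b := by
  obtain ⟨m, hm, hpm⟩ := h.exists_pos_le_p
  rw [intervalIntegrable_iff_integrableOn_Ioc_of_le hb]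
  have hq := (h.integrableOn_q b).aestronglyMeasurable.aemeasurable
  have hp : AEMeasurable p (volume.restrict (Ioc 0 b)) :=
    (h.continuousOn_p.mono fun x hx => mem_Ici.2 (mem_Ioc.1 hx).1.le).aemeasurable measurableSet_Ioc
  have hmeas : AEStronglyMeasurable (omg p q z) (volume.restrict (Ioc 0 b)) :=
    (((measurable_ofReal.comp_aemeasurable hq).sub_const z).div
      (measurable_ofReal.comp_aemeasurable hp)).pow_const _ |>.aestronglyMeasurable
  refine Integrable.mono' (g := fun t => (1 + ‖z‖ / m) + |q t| / m)
    ((integrableOn_const measure_Ioc_lt_top.ne).add ((h.integrableOn_q b).abs.div_const m)) hmeas ?_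
  filter_upwards [ae_restrict_mem measurableSet_Ioc] with t ht
  have hpt : m ≤ p t := hpm t ht.1.le
  calc ‖omg p q z t‖ ≤ 1 + ‖((q t : ℂ) - z) / p t‖ := norm_cpow_one_half_le _
    _ ≤ 1 + (|q t| + ‖z‖) / m := by
      rw [norm_div, norm_real, Real.norm_of_nonneg (hm.trans_le hpt).le]
      gcongr
      exact (norm_sub_le _ _).trans_eq (by rw [norm_real, Real.norm_eq_abs])
    _ = (1 + ‖z‖ / m) + |q t| / m := by ring

lemma exists_pos_le_re_omg (h : PQData p p' q q' p₀ x₀) {z : ℂ}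
    (hz : ∀ t : ℝ, 0 ≤ t → (t : ℂ) ≠ z) {x₁ : ℝ} (hx₁ : x₀ ≤ x₁)
    (hx₁q : ∀ x : ℝ, x₁ ≤ x → |q x| ≤ ‖z‖ / 2) :
    ∃ δ > 0, ∀ s, x₁ ≤ s → δ ≤ (omg p q z s).re := by
  obtain ⟨c, hc, hcle⟩ := exists_pos_le_norm_ofReal_sub_add_re hz
  obtain ⟨M, hM⟩ := h.exists_le_p
  have hM0 : 0 < M := (h.p_pos 0 le_rfl).trans_le (hM 0 le_rfl)
  refine ⟨√(c / (2 * M)), by positivity, fun s hs => ?_⟩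
  have hs0 : 0 ≤ s := (h.hx₀.trans hx₁).trans hs
  have hN := hcle _ (hx₁q s hs)
  rw [re_omg_eq (h.p_pos s hs0)]
  exact Real.sqrt_le_sqrt (div_le_div₀ (hc.le.trans hN) hN (by linarith [h.p_pos s hs0])
    (by linarith [hM s hs0]))

end PQData

/-- the Volterra kernel is uniformly bounded:
`|G(x,y,z)| ≤ C` for all `y ≥ x ≥ x₁(z)`. -/
theorem statement5 (p p' q q' : ℝ → ℝ) (p₀ x₀ : ℝ)
    (hPQ : PQData p p' q q' p₀ x₀)
    (z : ℂ) (hz : ∀ t : ℝ, 0 ≤ t → (t : ℂ) ≠ z)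
    (x₁ : ℝ) (hx₁ : x₀ ≤ x₁) (hx₁q : ∀ x : ℝ, x₁ ≤ x → |q x| ≤ ‖z‖ / 2) :
    ∃ C : ℝ, ∀ x y : ℝ, x₁ ≤ x → x ≤ y → ‖Gker p q z x y‖ ≤ C := by
  obtain ⟨m, hm, hpm⟩ := hPQ.exists_pos_le_p
  obtain ⟨δ, hδ, hre⟩ := hPQ.exists_pos_le_re_omg hz hx₁ hx₁q
  have hx₁0 : 0 ≤ x₁ := hPQ.hx₀.trans hx₁
  refine ⟨m⁻¹ * (2 * δ)⁻¹, fun x y hx hxy => ?_⟩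
  have hx0 : 0 ≤ x := hx₁0.trans hx
  exact norm_Gker_le hm hδ hx0 hxy (fun s hs => hpm s (hx0.trans hs.1))
    (hPQ.intervalIntegrable_omg z (hx0.trans hxy)) fun s hs => hre s (hx.trans hs.1)
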